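/- For every n ≥ 1, the sum over all Dyck paths β of length 2n+2 of the product ∏_{i=1}^n h_i*(β) equals 2·4·6···(2n), where h_i*(β) is the height of the i-th down step minus 1 if no up step lies to the right of that down step, and otherwise equals the height. -/

import Mathlib

open Finset

/-- `D ⊆ {1,…,L}` is the set of down steps of a Dyck path of length `L`:
it has `L/2` elements and every prefix has at least as many up steps as down steps. -/
def IsDyck (L : ℕ) (D : Finset ℕ) : Prop :=
  D ⊆ Finset.Icc 1 L ∧ 2 * D.card = L ∧ ∀ k ≤ L, 2 * (D.filter (· ≤ k)).card ≤ k

instance (L : ℕ) : DecidablePred (IsDyck L) := fun D => by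
  unfold IsDyck; infer_instance

/-- The collection of all Dyck paths (encoded by their down-step sets) of length `L`. -/
def dyckPaths (L : ℕ) : Finset (Finset ℕ) :=
  (Finset.Icc 1 L).powerset.filter (IsDyck L)

/-- The position (in `{1,…,L}`) of the `i`-th down step (`1`-indexed). -/
def dstep (D : Finset ℕ) (i : ℕ) : ℕ := (D.sort (· ≤ ·)).getD (i - 1) 0

/-- The height `h_i` of the `i`-th down step of a Dyck path:  the step goes from
`(d_i - 1, h_i)` to `(d_i, h_i - 1)`; equivalently `h_i = d_i + 1 - 2 i`. -/
def ht (D : Finset ℕ) (i : ℕ) : ℕ := dstep D i + 1 - 2 * i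

/-- The modified height `h_i^*`: equal to `h_i - 1` if there is no up step to the right of
the `i`-th down step, and to `h_i` otherwise. -/
def hstar (L : ℕ) (D : Finset ℕ) (i : ℕ) : ℕ :=
  if Finset.Ioc (dstep D i) L ⊆ D then ht D i - 1 else ht D i

/-- `crossout w k` is the pair (positions marked A, positions marked B) after `k` rounds of
the crossout procedure: in each round, first mark B at the unmarked position with the smallest
value `w i`, then mark A at the leftmost unmarked position. -/
def crossout {N : ℕ} (w : Equiv.Perm (Fin N)) : ℕ → Finset (Fin N) × Finset (Fin N)
  | 0 => (∅, ∅)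
  | k + 1 =>
    let p := crossout w k
    let u := (Finset.univ : Finset (Fin N)) \ (p.1 ∪ p.2)
    if hu : u.Nonempty then
      let b := w.symm ((u.image w).min' (hu.image _))
      if ha : (u.erase b).Nonempty then
        (insert ((u.erase b).min' ha) p.1, insert b p.2)
      else (p.1, insert b p.2)
    else p

/-- The set of positions marked A under the crossout procedure. -/
def markA {N : ℕ} (w : Equiv.Perm (Fin N)) : Finset (Fin N) := (crossout w N).1

/-- The set of positions marked B under the crossout procedure. -/
def markB {N : ℕ} (w : Equiv.Perm (Fin N)) : Finset (Fin N) := (crossout w N).2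

/-- Down-step set of Alice's path `p_A(w)`:  the values (in `{1,…,N}`) at positions marked A. -/
def pAset {N : ℕ} (w : Equiv.Perm (Fin N)) : Finset ℕ :=
  (markA w).image (fun a => Fin.val (w a) + 1)

/-- Down-step set of Bob's path `p_B(w)`:  `{b + 1 : b marked B} ∪ {N + 2}`
(positions taken in `{1,…,N}`, so `b + 1` becomes `(b : ℕ) + 2`). -/
def pBset {N : ℕ} (w : Equiv.Perm (Fin N)) : Finset ℕ :=
  insert (N + 2) ((markB w).image (fun b => Fin.val b + 2))

/-- Number of AA inversions of `w`. -/
def aaInv {N : ℕ} (w : Equiv.Perm (Fin N)) : ℕ :=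
  (Finset.univ.filter (fun p : Fin N × Fin N =>
    p.1 < p.2 ∧ w p.2 < w p.1 ∧ p.1 ∈ markA w ∧ p.2 ∈ markA w)).card

/-- Number of BB inversions of `w`. -/
def bbInv {N : ℕ} (w : Equiv.Perm (Fin N)) : ℕ :=
  (Finset.univ.filter (fun p : Fin N × Fin N =>
    p.1 < p.2 ∧ w p.2 < w p.1 ∧ p.1 ∈ markB w ∧ p.2 ∈ markB w)).card

/-- Number of AB inversions of `w`. -/
def abInv {N : ℕ} (w : Equiv.Perm (Fin N)) : ℕ :=
  (Finset.univ.filter (fun p : Fin N × Fin N =>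
    p.1 < p.2 ∧ w p.2 < w p.1 ∧ p.1 ∈ markA w ∧ p.2 ∈ markB w)).card

/-- Total number of inversions of `w`. -/
def invW {N : ℕ} (w : Equiv.Perm (Fin N)) : ℕ :=
  (Finset.univ.filter (fun p : Fin N × Fin N => p.1 < p.2 ∧ w p.2 < w p.1)).card

/-- The statistic `z(w) = #{i < j : w i < w j and i is marked B}`. -/
def zstat {N : ℕ} (w : Equiv.Perm (Fin N)) : ℕ :=
  (Finset.univ.filter (fun p : Fin N × Fin N =>
    p.1 < p.2 ∧ w p.1 < w p.2 ∧ p.1 ∈ markB w)).card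

/-- Label carried by the down step of `p_A` corresponding to the A-position `a`:
one plus the number of A-positions to the left of `a` with larger value. -/
def labelA {N : ℕ} (w : Equiv.Perm (Fin N)) (a : Fin N) : ℕ :=
  1 + ((markA w).filter (fun a' => a' < a ∧ w a < w a')).card

/-- The label sequence `ℓ` of `p_A(w)`: `ellSeq w r` is the label on the `r`-th down step. -/
def ellSeq {N : ℕ} (w : Equiv.Perm (Fin N)) (r : ℕ) : ℕ :=
  ∑ a ∈ (markA w).filter (fun a => Fin.val (w a) + 1 = dstep (pAset w) r), labelA w a

/-- Label carried by the down step of `p_B` corresponding to the B-position `b`: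
one plus the number of B-positions to the right of `b` with smaller value. -/
def labelB {N : ℕ} (w : Equiv.Perm (Fin N)) (b : Fin N) : ℕ :=
  1 + ((markB w).filter (fun b' => w b' < w b ∧ b < b')).card

/-- The label sequence `m` of `p_B(w)`: `emSeq w r` is the label on the `r`-th down step. -/
def emSeq {N : ℕ} (w : Equiv.Perm (Fin N)) (r : ℕ) : ℕ :=
  ∑ b ∈ (markB w).filter (fun b => Fin.val b + 2 = dstep (pBset w) r), labelB w b

/-- The `q`-integer `[k]_q = 1 + q + ⋯ + q^{k-1}` in `ℤ[q]`. -/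
noncomputable def qint (k : ℕ) : Polynomial ℤ := ∑ j ∈ Finset.range k, Polynomial.X ^ j

/-- The `q`-integer `[k]` in the variable `X v` of the two-variable polynomial ring. -/
noncomputable def qint2 (v : Fin 2) (k : ℕ) : MvPolynomial (Fin 2) ℤ :=
  ∑ j ∈ Finset.range k, (MvPolynomial.X v) ^ j

/-- `M` is a perfect matching of `{1,…,2n}`: a family of pairwise disjoint 2-element sets
whose union is `{1,…,2n}`. -/
def IsMatching (n : ℕ) (M : Finset (Finset ℕ)) : Prop :=
  (∀ e ∈ M, e.card = 2) ∧ (M : Set (Finset ℕ)).PairwiseDisjoint id ∧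
    M.biUnion id = Finset.Icc 1 (2 * n)

/-!
A Dyck path with `n + 1` down steps is determined by the heights `H₀, …, Hₙ` of its down steps,
and these are exactly the sequences with `Hⱼ ≥ 1`, `Hⱼ₊₁ ≥ Hⱼ - 1` and `Hₙ = 1`. In this
language, `h*ⱼ₊₁ = Hⱼ - 1` exactly when `Hⱼ` takes its largest possible value `n + 1 - j`, i.e.
when the path only descends after that step. Splitting the sum according to the first height
gives a recursion for the sums `S(m, c)` over height sequences of length `m + 1` with first
entry at least `c`, and induction on `m` and then on `k` shows
`(2k - 1)‼ · S(m, c) = (m + k)!` whenever `c + k = m + 1`. For `c = 1` this is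
`(2n - 1)‼ · S(n, 1) = (2n)! = (2n - 1)‼ · (2n)‼`, so `S(n, 1) = (2n)‼ = 2 · 4 ⋯ (2n)`.
-/

open Nat

section FiniteNth

variable {D : Finset ℕ}

lemma forall_lt_card_toFinset_iff {j : ℕ} :
    (∀ hf : (Set.ofPred (· ∈ D)).Finite, j < #hf.toFinset) ↔ j < #D :=
  ⟨fun h => by simpa using h D.finite_toSet, fun h _ => by simpa using h⟩

lemma dstep_add_one (D : Finset ℕ) (j : ℕ) : dstep D (j + 1) = Nat.nth (· ∈ D) j := by
  rw [dstep, Nat.nth_eq_getD_sort (p := (· ∈ D)) D.finite_toSet]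
  simp

lemma card_filter_le_eq_count (D : Finset ℕ) (k : ℕ) :
    #(D.filter (· ≤ k)) = Nat.count (· ∈ D) (k + 1) := by
  rw [Nat.count_eq_card_filter_range]
  congr 1
  ext x
  simp [and_comm]

lemma nth_image_range_of_strictMono {f : ℕ → ℕ} (hf : StrictMono f) {k j : ℕ} (hj : j < k) :
    Nat.nth (· ∈ (range k).image f) j = f j := by
  have hcard : #((range k).image f) = k := by
    rw [card_image_of_injective _ hf.injective, card_range]
  have hdom : {i : ℕ | ∀ hf : (Set.ofPred (· ∈ (range k).image f)).Finite, i < #hf.toFinset} =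
      Set.Iio k := by
    ext i
    exact forall_lt_card_toFinset_iff.trans (by rw [hcard]; rfl)
  have huniq := Nat.eq_nth_of_strictMonoOn_of_mapsTo_of_surjOn (p := (· ∈ (range k).image f)) f
  rw [hdom] at huniq
  refine (huniq ?_ ?_ (hf.strictMonoOn _) (Set.mem_Iio.mpr hj)).symm
  · intro x hx
    obtain ⟨i, hi, rfl⟩ := mem_image.mp (show x ∈ (range k).image f from hx)
    exact ⟨i, mem_range.mp hi, rfl⟩
  · exact fun i hi => mem_image_of_mem f (mem_range.mpr hi)

lemma Ioc_subset_iff_card_filter_eq {a L : ℕ} (hD : ∀ x ∈ D, x ≤ L) :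
    Ioc a L ⊆ D ↔ #(D.filter (a < ·)) = L - a := by
  have hsub : D.filter (a < ·) ⊆ Ioc a L := fun x hx => by
    rw [mem_filter] at hx
    exact mem_Ioc.mpr ⟨hx.2, hD x hx.1⟩
  rw [← Nat.card_Ioc a L]
  constructor
  · intro h
    congr 1
    exact hsub.antisymm fun x hx => mem_filter.mpr ⟨h hx, (mem_Ioc.mp hx).1⟩
  · intro h
    rw [← eq_of_subset_of_card_le hsub h.ge]
    exact filter_subset _ _

end FiniteNth

section Dyck

variable {D : Finset ℕ}

lemma mem_dyckPaths {L : ℕ} : D ∈ dyckPaths L ↔ IsDyck L D := by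
  simpa [dyckPaths] using fun h : IsDyck L D => h.1

lemma IsDyck.card_eq {n : ℕ} (hD : IsDyck (2 * n + 2) D) : #D = n + 1 := by
  have := hD.2.1
  omega

lemma IsDyck.nth_le {L j : ℕ} (hD : IsDyck L D) (hj : j < #D) : Nat.nth (· ∈ D) j ≤ L :=
  (mem_Icc.mp (hD.1 (Nat.nth_mem _ (forall_lt_card_toFinset_iff.mpr hj)))).2

lemma IsDyck.two_mul_add_two_le_nth {L j : ℕ} (hD : IsDyck L D) (hj : j < #D) :
    2 * j + 2 ≤ Nat.nth (· ∈ D) j := by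
  have := hD.2.2 _ (hD.nth_le hj)
  rwa [card_filter_le_eq_count, Nat.count_nth_succ (forall_lt_card_toFinset_iff.mpr hj)] at this

lemma isDyck_of_two_mul_add_two_le_nth {L : ℕ} (hsub : D ⊆ Icc 1 L) (hcard : 2 * #D = L)
    (hnth : ∀ j < #D, 2 * j + 2 ≤ Nat.nth (· ∈ D) j) : IsDyck L D := by
  refine ⟨hsub, hcard, fun k _ => ?_⟩
  rw [card_filter_le_eq_count]
  set c := Nat.count (· ∈ D) (k + 1)
  rcases Nat.eq_zero_or_pos c with h0 | hpos
  · simp [h0]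
  have hlt : Nat.nth (· ∈ D) (c - 1) < k + 1 := Nat.nth_lt_of_lt_count (by omega)
  have hle : c ≤ #D := by simpa using Nat.count_le_card (p := (· ∈ D)) D.finite_toSet (k + 1)
  have := hnth (c - 1) (by omega)
  omega

lemma IsDyck.Ioc_nth_subset_iff {n j : ℕ} (hD : IsDyck (2 * n + 2) D) (hj : j < n + 1) :
    Ioc (Nat.nth (· ∈ D) j) (2 * n + 2) ⊆ D ↔ Nat.nth (· ∈ D) j = n + j + 2 := by
  have hcard := hD.card_eq
  have hle : #(D.filter (· ≤ Nat.nth (· ∈ D) j)) = j + 1 := by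
    rw [card_filter_le_eq_count,
      Nat.count_nth_succ (forall_lt_card_toFinset_iff.mpr (show j < #D by omega))]
  have hsplit := card_filter_add_card_filter_not (s := D) (p := (· ≤ Nat.nth (· ∈ D) j))
  simp only [not_le] at hsplit
  have htop := hD.nth_le (show j < #D by omega)
  rw [Ioc_subset_iff_card_filter_eq fun x hx => (mem_Icc.mp (hD.1 hx)).2]
  generalize Nat.nth (· ∈ D) j = d at *
  omega

end Dyck

section HeightSequences

/-- The height sequences `[H₀, …, Hₘ]` of the down steps of Dyck paths with `m + 1` down steps,
with `H₀ ≥ c`. -/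
def heightLists : ℕ → ℕ → Finset (List ℕ)
  | 0, c => if c ≤ 1 then {[1]} else ∅
  | m + 1, c => (Icc c (m + 2)).biUnion fun h => (heightLists m (max (h - 1) 1)).image (h :: ·)

/-- The product of the `h*` over all but the last down step; `Hⱼ + j = m + 1` is the largest
possible value of `Hⱼ`, reached exactly when no up step follows. -/
def heightWeight (m : ℕ) (H : List ℕ) : ℕ :=
  ∏ j ∈ range m, (H.getD j 0 - if H.getD j 0 + j = m + 1 then 1 else 0)

def heightSum (m c : ℕ) : ℕ :=
  ∑ H ∈ heightLists m c, heightWeight m H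

lemma getD_zero_le_of_mem_heightLists {m c : ℕ} {H : List ℕ} (hH : H ∈ heightLists m c) :
    H.getD 0 0 ≤ m + 1 := by
  cases m with
  | zero => by_cases hc : c ≤ 1 <;> simp_all [heightLists]
  | succ m =>
    simp only [heightLists, mem_biUnion, mem_image, mem_Icc] at hH
    obtain ⟨h, ⟨-, hh⟩, t, -, rfl⟩ := hH
    simpa using hh

lemma mem_heightLists_iff {m c : ℕ} (hc : 0 < c) {H : List ℕ} :
    H ∈ heightLists m c ↔ H.length = m + 1 ∧ (∀ j < m, H.getD j 0 ≤ H.getD (j + 1) 0 + 1) ∧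
      (∀ j < m + 1, 1 ≤ H.getD j 0) ∧ H.getD m 0 = 1 ∧ c ≤ H.getD 0 0 := by
  induction m generalizing c H with
  | zero =>
    rcases H with _ | ⟨a, _ | ⟨b, t⟩⟩ <;> by_cases hc1 : c ≤ 1 <;> simp [heightLists, hc1] <;> omega
  | succ m ih =>
    rcases H with _ | ⟨h, t⟩
    · simp [heightLists]
    have hcons : h :: t ∈ heightLists (m + 1) c ↔
        (c ≤ h ∧ h ≤ m + 2) ∧ t ∈ heightLists m (max (h - 1) 1) := by
      simp [heightLists]
    have htail := ih (c := max (h - 1) 1) (H := t) (by omega)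
    rw [hcons]
    simp only [List.length_cons, Nat.forall_lt_succ_left, List.getD_cons_zero,
      List.getD_cons_succ] at htail ⊢
    constructor
    · rintro ⟨⟨hch, -⟩, ht⟩
      obtain ⟨hlen, hchain, ⟨hpos0, hpos⟩, hlast, hhead⟩ := htail.mp ht
      exact ⟨by omega, ⟨by omega, hchain⟩, ⟨by omega, hpos0, hpos⟩, hlast, hch⟩
    · rintro ⟨hlen, ⟨hh, hchain⟩, ⟨-, hpos0, hpos⟩, hlast, hch⟩
      have ht := htail.mpr ⟨by omega, hchain, ⟨hpos0, hpos⟩, hlast, by omega⟩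
      exact ⟨⟨hch, by have := getD_zero_le_of_mem_heightLists ht; omega⟩, ht⟩

lemma heightWeight_cons (m h : ℕ) (t : List ℕ) :
    heightWeight (m + 1) (h :: t) = (h - if h = m + 2 then 1 else 0) * heightWeight m t := by
  simp only [heightWeight, prod_range_succ', List.getD_cons_succ, List.getD_cons_zero]
  rw [mul_comm]
  congr 1
  refine prod_congr rfl fun j _ => ?_
  simp only [← add_assoc, Nat.add_right_cancel_iff]

lemma heightSum_zero (c : ℕ) : heightSum 0 c = if c ≤ 1 then 1 else 0 := by
  by_cases hc : c ≤ 1 <;> simp [heightSum, heightLists, heightWeight, hc]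

lemma heightSum_succ (m c : ℕ) :
    heightSum (m + 1) c =
      ∑ h ∈ Icc c (m + 2), (h - if h = m + 2 then 1 else 0) * heightSum m (max (h - 1) 1) := by
  rw [heightSum, heightLists, sum_biUnion]
  · refine sum_congr rfl fun h _ => ?_
    rw [sum_image fun _ _ _ _ hst => List.cons_injective hst, heightSum, mul_sum]
    exact sum_congr rfl fun t _ => heightWeight_cons m h t
  · intro a _ b _ hab
    simp only [Function.onFun, disjoint_left, mem_image]
    rintro _ ⟨s, -, rfl⟩ ⟨t, -, hts⟩
    exact hab (List.cons_eq_cons.mp hts).1.symm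

lemma heightSum_succ_eq_add {m c : ℕ} (hc : c ≤ m + 2) :
    heightSum (m + 1) c = (c - if c = m + 2 then 1 else 0) * heightSum m (max (c - 1) 1) +
      heightSum (m + 1) (c + 1) := by
  rw [heightSum_succ, heightSum_succ, ← add_sum_Ioc_eq_sum_Icc hc, Icc_add_one_left_eq_Ioc]

lemma heightSum_succ_of_lt {m c : ℕ} (hc : m + 2 < c) : heightSum (m + 1) c = 0 := by
  rw [heightSum_succ, Icc_eq_empty_of_lt hc, sum_empty]

theorem doubleFactorial_mul_heightSum {m c k : ℕ} (hc : 0 < c) (hck : c + k = m + 1) :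
    (2 * k - 1)‼ * heightSum m c = (m + k)! := by
  induction m generalizing c k with
  | zero =>
    obtain ⟨rfl, rfl⟩ : c = 1 ∧ k = 0 := by omega
    simp [heightSum_zero]
  | succ m ih =>
    induction k generalizing c with
    | zero =>
      obtain rfl : c = m + 2 := by omega
      have htop : heightSum m (m + 1) = m ! := by
        simpa using ih (c := m + 1) (k := 0) (by omega) rfl
      rw [heightSum_succ_eq_add le_rfl, heightSum_succ_of_lt (by omega), if_pos rfl,
        show max (m + 2 - 1) 1 = m + 1 by omega, htop]
      simp [factorial_succ]
    | succ k ihk =>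
      have hrest := ihk (c := c + 1) (by omega) (by omega)
      have hfirst : (2 * k + 1)‼ * heightSum m (max (c - 1) 1) = (m + k + 1)! := by
        rcases Nat.lt_or_ge k m with hkm | hkm
        · rw [show max (c - 1) 1 = c - 1 by omega, show 2 * k + 1 = 2 * (k + 1) - 1 by omega,
            ih (by omega) (by omega)]
          rfl
        · obtain rfl : k = m := by omega
          rw [show max (c - 1) 1 = 1 by omega, doubleFactorial_add_one, mul_assoc,
            ih (c := 1) (k := k) one_pos (by omega), show k + k = 2 * k by omega,
            ← factorial_succ]
      rw [heightSum_succ_eq_add (by omega), if_neg (by omega), Nat.sub_zero,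
        show 2 * (k + 1) - 1 = 2 * k + 1 by omega]
      calc (2 * k + 1)‼ * (c * heightSum m (max (c - 1) 1) + heightSum (m + 1) (c + 1))
          = c * ((2 * k + 1)‼ * heightSum m (max (c - 1) 1)) +
              (2 * k + 1) * ((2 * k - 1)‼ * heightSum (m + 1) (c + 1)) := by
            rw [doubleFactorial_add_one]; ring
        _ = (c + 2 * k + 1) * (m + k + 1)! := by
            rw [hfirst, hrest, show m + 1 + k = m + k + 1 by omega]; ring
        _ = (m + 1 + (k + 1))! := by
            rw [show m + 1 + (k + 1) = m + k + 1 + 1 by omega, factorial_succ (m + k + 1),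
              show c + 2 * k + 1 = m + k + 1 + 1 by omega]

lemma factorial_two_mul_eq_doubleFactorial_mul (n : ℕ) :
    (2 * n)! = (2 * n - 1)‼ * (2 * n)‼ := by
  rcases n.eq_zero_or_pos with rfl | hn
  · rfl
  obtain ⟨k, hk⟩ : ∃ k, 2 * n = k + 1 := ⟨2 * n - 1, by omega⟩
  rw [hk, factorial_eq_mul_doubleFactorial, Nat.add_sub_cancel, mul_comm]

theorem heightSum_one (n : ℕ) : heightSum n 1 = ∏ i ∈ range n, (2 * i + 2) := by
  have h := doubleFactorial_mul_heightSum (m := n) one_pos (add_comm 1 n)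
  rw [← two_mul, factorial_two_mul_eq_doubleFactorial_mul] at h
  rw [Nat.eq_of_mul_eq_mul_left (doubleFactorial_pos _) h, doubleFactorial_eq_prod_even]
  rfl

end HeightSequences

section Heights

variable {D : Finset ℕ}

def heights (D : Finset ℕ) : List ℕ := (List.range #D).map fun j => ht D (j + 1)

def ofHeights (H : List ℕ) : Finset ℕ := (range H.length).image fun j => H.getD j 0 + 2 * j + 1

@[simp] lemma length_heights (D : Finset ℕ) : (heights D).length = #D := by simp [heights]

lemma getD_heights {j : ℕ} (hj : j < #D) :
    (heights D).getD j 0 = Nat.nth (· ∈ D) j + 1 - 2 * (j + 1) := by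
  simp [heights, ht, dstep_add_one, hj]

lemma heights_mem_heightLists {n : ℕ} (hD : IsDyck (2 * n + 2) D) :
    heights D ∈ heightLists n 1 := by
  have hcard := hD.card_eq
  have hlow (j : ℕ) (hj : j < n + 1) := hD.two_mul_add_two_le_nth (j := j) (by omega)
  have htop := hD.nth_le (show n < #D by omega)
  rw [mem_heightLists_iff one_pos]
  refine ⟨by simp [hcard], fun j hj => ?_, fun j hj => ?_, ?_, ?_⟩
  · rw [getD_heights (by omega), getD_heights (by omega)]
    have := Nat.nth_lt_nth' (p := (· ∈ D)) (Nat.lt_add_one j)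
      (forall_lt_card_toFinset_iff.mpr (by omega))
    have := hlow j (by omega)
    omega
  · rw [getD_heights (by omega)]; have := hlow j (by omega); omega
  · rw [getD_heights (by omega)]; have := hlow n (by omega); omega
  · rw [getD_heights (by omega)]; have := hlow 0 (by omega); omega

lemma strictMono_of_mem_heightLists {n : ℕ} {H : List ℕ} (hH : H ∈ heightLists n 1) :
    StrictMono fun j => H.getD j 0 + 2 * j + 1 := by
  obtain ⟨hlen, hchain, -, hlast, -⟩ := (mem_heightLists_iff one_pos).mp hH
  refine strictMono_nat_of_lt_succ fun j => ?_
  rcases lt_trichotomy j n with h | rfl | h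
  · have := hchain j h; omega
  · rw [hlast, List.getD_eq_default _ _ (by omega)]; omega
  · rw [List.getD_eq_default _ _ (by omega), List.getD_eq_default _ _ (by omega)]; omega

lemma card_ofHeights {n : ℕ} {H : List ℕ} (hH : H ∈ heightLists n 1) :
    #(ofHeights H) = n + 1 := by
  rw [ofHeights, card_image_of_injective _ (strictMono_of_mem_heightLists hH).injective,
    card_range, ((mem_heightLists_iff one_pos).mp hH).1]

lemma nth_ofHeights {n j : ℕ} {H : List ℕ} (hH : H ∈ heightLists n 1) (hj : j < n + 1) :
    Nat.nth (· ∈ ofHeights H) j = H.getD j 0 + 2 * j + 1 :=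
  nth_image_range_of_strictMono (strictMono_of_mem_heightLists hH)
    (by rwa [((mem_heightLists_iff one_pos).mp hH).1])

lemma isDyck_ofHeights {n : ℕ} {H : List ℕ} (hH : H ∈ heightLists n 1) :
    IsDyck (2 * n + 2) (ofHeights H) := by
  obtain ⟨hlen, -, hpos, hlast, -⟩ := (mem_heightLists_iff one_pos).mp hH
  have hmono := strictMono_of_mem_heightLists hH
  refine isDyck_of_two_mul_add_two_le_nth ?_ (by rw [card_ofHeights hH]; ring) fun j hj => ?_
  · intro x hx
    obtain ⟨j, hj, rfl⟩ := mem_image.mp hx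
    rw [mem_range, hlen] at hj
    have := hmono.monotone (show j ≤ n by omega)
    simp only [hlast] at this
    rw [mem_Icc]
    omega
  · rw [card_ofHeights hH] at hj
    rw [nth_ofHeights hH hj]
    have := hpos j (by omega)
    omega

lemma ofHeights_heights {L : ℕ} (hD : IsDyck L D) : ofHeights (heights D) = D := by
  have hnth {j : ℕ} (hj : j < #D) : (heights D).getD j 0 + 2 * j + 1 = Nat.nth (· ∈ D) j := by
    rw [getD_heights hj]
    have := hD.two_mul_add_two_le_nth hj
    omega
  ext x
  simp only [ofHeights, mem_image, mem_range, length_heights]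
  constructor
  · rintro ⟨j, hj, rfl⟩
    rw [hnth hj]
    exact Nat.nth_mem _ (forall_lt_card_toFinset_iff.mpr hj)
  · intro hx
    obtain ⟨j, hj, rfl⟩ := Nat.exists_lt_card_finite_nth_eq (p := (· ∈ D)) D.finite_toSet hx
    have hj' : j < #D := forall_lt_card_toFinset_iff.mp fun _ => hj
    exact ⟨j, hj', hnth hj'⟩

lemma heights_ofHeights {n : ℕ} {H : List ℕ} (hH : H ∈ heightLists n 1) :
    heights (ofHeights H) = H := by
  have hlen := ((mem_heightLists_iff one_pos).mp hH).1
  refine List.ext_getElem (by rw [length_heights, card_ofHeights hH, hlen]) fun j h1 _ => ?_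
  rw [length_heights, card_ofHeights hH] at h1
  rw [← List.getD_eq_getElem _ 0, ← List.getD_eq_getElem _ 0,
    getD_heights (by rwa [card_ofHeights hH]), nth_ofHeights hH h1]
  omega

lemma IsDyck.hstar_add_one {n j : ℕ} (hD : IsDyck (2 * n + 2) D) (hj : j < n) :
    hstar (2 * n + 2) D (j + 1) =
      (heights D).getD j 0 - if (heights D).getD j 0 + j = n + 1 then 1 else 0 := by
  have hcard := hD.card_eq
  have hlow := hD.two_mul_add_two_le_nth (show j < #D by omega)
  simp only [hstar, ht, dstep_add_one, getD_heights (show j < #D by omega),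
    hD.Ioc_nth_subset_iff (show j < n + 1 by omega)]
  split_ifs <;> omega

lemma IsDyck.prod_hstar {n : ℕ} (hD : IsDyck (2 * n + 2) D) :
    ∏ i ∈ Icc 1 n, hstar (2 * n + 2) D i = heightWeight n (heights D) := by
  rw [← Ico_add_one_right_eq_Icc, ← zero_add 1, ← prod_Ico_add', ← range_eq_Ico]
  exact prod_congr rfl fun j hj => hD.hstar_add_one (mem_range.mp hj)

end Heights

theorem stmt2_general (n : ℕ) :
    ∑ β ∈ dyckPaths (2 * n + 2), ∏ i ∈ Finset.Icc 1 n, hstar (2 * n + 2) β i =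
      ∏ i ∈ Finset.range n, (2 * i + 2) := by
  rw [← heightSum_one, heightSum]
  exact sum_nbij' heights ofHeights
    (fun D hD => heights_mem_heightLists (mem_dyckPaths.mp hD))
    (fun H hH => mem_dyckPaths.mpr (isDyck_ofHeights hH))
    (fun D hD => ofHeights_heights (mem_dyckPaths.mp hD))
    (fun H hH => heights_ofHeights hH)
    (fun D hD => (mem_dyckPaths.mp hD).prod_hstar)

/-- `∑_{β ∈ D_{2n+2}} ∏_{i=1}^n h_i^*(β) = 2·4·6⋯(2n)`. -/
theorem stmt2 (n : ℕ) (hn : 1 ≤ n) :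
    ∑ β ∈ dyckPaths (2 * n + 2), ∏ i ∈ Finset.Icc 1 n, hstar (2 * n + 2) β i =
      ∏ i ∈ Finset.range n, (2 * i + 2) :=
  stmt2_general n
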